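/- Let A ∈ 𝒮ⁿ[k] be a Robinson matrix and let d ∈ 𝔻ᵏ satisfy the path condition for A. Then for every upper-bound-cycle C of A, β⁺(C)ᵀ d > 0. -/

import Mathlib

/-- The standard unit vector `χ_t ∈ ℤᵏ` (as a function `ℕ → ℤ`, supported on index `t`). -/
def chi (t : ℕ) : ℕ → ℤ := fun i => if i = t then 1 else 0

/-- The dot product `bᵀ d = Σ_{i=1}^k b_i d_i`. -/
def dotProd (k : ℕ) (b : ℕ → ℤ) (d : ℕ → ℝ) : ℝ :=
  ∑ i ∈ Finset.Icc 1 k, (b i : ℝ) * d i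

/-- `A ∈ 𝒮ⁿ[k]`: a symmetric matrix with entries in `{0,…,k}`, diagonal `k`,
entries increasing towards the diagonal. -/
def IsRobinson (n k : ℕ) (a : Fin n → Fin n → ℕ) : Prop :=
  (∀ u v, a u v = a v u) ∧ (∀ u, a u u = k) ∧ (∀ u v, a u v ≤ k) ∧
    ∀ u v w : Fin n, u < v → v < w → a u w ≤ a u v ∧ a u w ≤ a v w

/-- `d ∈ 𝔻ᵏ`: threshold vectors with `d 1 > d 2 > ⋯ > d k > 0`
(values outside `{1,…,k}` are irrelevant). -/
def IsThreshold (k : ℕ) (d : ℕ → ℝ) : Prop :=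
  (∀ i, 1 ≤ i → i < k → d (i + 1) < d i) ∧ 0 < d k

/-- Uniform embedding: for all pairs `u,v` and all `t ≤ k`,
`a u v = t ↔ d_{t+1} < |f v − f u| ≤ d_t`, with conventions `d_0 = +∞`, `d_{k+1} = −∞`. -/
def IsUnifEmb (n k : ℕ) (a : Fin n → Fin n → ℕ) (d : ℕ → ℝ)
    (f : Fin n → ℝ) : Prop :=
  ∀ u v : Fin n, ∀ t : ℕ, t ≤ k →
    (a u v = t ↔ (t = k ∨ d (t + 1) < |f v - f u|) ∧ (t = 0 ∨ |f v - f u| ≤ d t))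

/-- The strict inequality system: for all `u < v` and all `t ≤ k`,
`a u v = t ↔ d_{t+1} < f v − f u < d_t`, with conventions `d_0 = +∞`, `d_{k+1} = 0`. -/
def SatisfiesStrict (n k : ℕ) (a : Fin n → Fin n → ℕ) (d : ℕ → ℝ)
    (f : Fin n → ℝ) : Prop :=
  ∀ u v : Fin n, u < v → ∀ t : ℕ, t ≤ k →
    (a u v = t ↔ ((if t = k then (0 : ℝ) else d (t + 1)) < f v - f u) ∧
      (t = 0 ∨ f v - f u < d t))

/-- `β⁺(x,y)`: for `x < y`, `β⁺(x,y) = χ_{a x y}` (junk value `χ_0` when `a x y = 0`,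
where it is undefined); for `x > y`, `β⁺(x,y) = −β⁻(y,x)`. -/
def betaP {n : ℕ} (k : ℕ) (a : Fin n → Fin n → ℕ) (x y : Fin n) : ℕ → ℤ :=
  if x < y then chi (a x y)
  else if y < x then (if a x y = k then 0 else -chi (a x y + 1))
  else 0

/-- `β⁻(x,y)`: for `x < y`, `β⁻(x,y) = χ_{a x y + 1}` if `a x y < k` and `0` if `a x y = k`;
for `x > y`, `β⁻(x,y) = −β⁺(y,x)`. -/
def betaM {n : ℕ} (k : ℕ) (a : Fin n → Fin n → ℕ) (x y : Fin n) : ℕ → ℤ :=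
  if x < y then (if a x y = k then 0 else chi (a x y + 1))
  else if y < x then -chi (a x y)
  else 0

/-- `β⁺(W) = Σ_i β⁺(w_{i−1}, w_i)` over the steps of the walk `W`. -/
def betaPWalk {n : ℕ} (k : ℕ) (a : Fin n → Fin n → ℕ) (w : List (Fin n)) : ℕ → ℤ :=
  ((w.zip w.tail).map fun p => betaP k a p.1 p.2).sum

/-- `β⁻(W) = Σ_i β⁻(w_{i−1}, w_i)` over the steps of the walk `W`. -/
def betaMWalk {n : ℕ} (k : ℕ) (a : Fin n → Fin n → ℕ) (w : List (Fin n)) : ℕ → ℤ :=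
  ((w.zip w.tail).map fun p => betaM k a p.1 p.2).sum

/-- A `(u,v)`-upper-bound-walk: a walk from `u` to `v` with consecutive entries distinct,
in which every increasing step is an edge (`a x y ≥ 1`). -/
def IsUBWalk {n : ℕ} (a : Fin n → Fin n → ℕ) (u v : Fin n) (w : List (Fin n)) : Prop :=
  w.head? = some u ∧ w.getLast? = some v ∧
    List.Chain' (fun x y => x ≠ y ∧ (x < y → 1 ≤ a x y)) w

/-- A `(u,v)`-lower-bound-walk: a walk from `u` to `v` with consecutive entries distinct,
in which every decreasing step is an edge (`a x y ≥ 1`). -/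
def IsLBWalk {n : ℕ} (a : Fin n → Fin n → ℕ) (u v : Fin n) (w : List (Fin n)) : Prop :=
  w.head? = some u ∧ w.getLast? = some v ∧
    List.Chain' (fun x y => x ≠ y ∧ (y < x → 1 ≤ a x y)) w

/-- An upper-bound-cycle: a `(u,u)`-upper-bound-walk of length `p ≥ 2` in which
`u = w_0 = w_p` is the only repeated vertex. -/
def IsUBCycle {n : ℕ} (a : Fin n → Fin n → ℕ) (w : List (Fin n)) : Prop :=
  ∃ u : Fin n, IsUBWalk a u u w ∧ 3 ≤ w.length ∧ w.dropLast.Nodup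

/-- The path condition for `A` and `d`: for all `u < v`, every `(u,v)`-upper-bound-path `W₁`
and every `(u,v)`-lower-bound-path `W₂` satisfy `β⁻(W₂)ᵀ d < β⁺(W₁)ᵀ d`. -/
def PathCondition (n k : ℕ) (a : Fin n → Fin n → ℕ) (d : ℕ → ℝ) : Prop :=
  ∀ u v : Fin n, u < v → ∀ w₁ w₂ : List (Fin n),
    IsUBWalk a u v w₁ → w₁.Nodup → IsLBWalk a u v w₂ → w₂.Nodup →
      dotProd k (betaMWalk k a w₂) d < dotProd k (betaPWalk k a w₁) d

/-- The prefix-sum partial order `⪯` on `ℤᵏ`. -/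
def Preceq (k : ℕ) (x y : ℕ → ℤ) : Prop :=
  ∀ t, 1 ≤ t → t ≤ k → ∑ i ∈ Finset.Icc 1 t, x i ≤ ∑ i ∈ Finset.Icc 1 t, y i

/-!
Cut an upper-bound-cycle through `u` at the predecessor `x` of `u`: the cycle becomes an
upper-bound-path `P` from `u` to `x` followed by the single step `x → u`. Read backwards, each of
the two pieces is a lower-bound-path, and reversing a walk turns `β⁺` into `-β⁻` because the
matrix is symmetric. The path condition for the pair `{u, x}` (in whichever order) compares one
piece with the reversal of the other, which says exactly that `β⁺(C)ᵀ d > 0`.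
-/

section StepSum

variable {α M : Type*} [AddCommMonoid M]

def stepSum (f : α → α → M) (w : List α) : M :=
  ((w.zip w.tail).map fun p => f p.1 p.2).sum

variable (f : α → α → M)

@[simp] lemma stepSum_singleton (x : α) : stepSum f [x] = 0 := rfl

@[simp] lemma stepSum_cons_cons (x y : α) (l : List α) :
    stepSum f (x :: y :: l) = f x y + stepSum f (y :: l) := by
  simp [stepSum]

lemma stepSum_concat : ∀ (l : List α) (hl : l ≠ []) (y : α),
    stepSum f (l ++ [y]) = stepSum f l + f (l.getLast hl) y
  | [x], _, y => by simp
  | x :: z :: l, _, y => by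
    simp only [List.cons_append, stepSum_cons_cons, List.getLast_cons_cons]
    rw [← List.cons_append, stepSum_concat (z :: l) (List.cons_ne_nil _ _), add_assoc]

lemma stepSum_reverse : ∀ l : List α, stepSum f l.reverse = stepSum (fun x y => f y x) l
  | [] => rfl
  | [x] => rfl
  | x :: y :: l => by
    rw [List.reverse_cons, stepSum_concat f _ (by simp), stepSum_reverse (y :: l),
      stepSum_cons_cons, List.getLast_reverse, List.head_cons, add_comm]

lemma stepSum_neg {G : Type*} [AddCommGroup G] (g : α → α → G) (w : List α) :
    stepSum (fun x y => -g x y) w = -stepSum g w := by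
  simpa [stepSum, Function.comp_def] using
    (map_list_sum (negAddMonoidHom : G →+ G) ((w.zip w.tail).map fun p => g p.1 p.2)).symm

end StepSum

lemma betaPWalk_eq_stepSum {n : ℕ} (k : ℕ) (a : Fin n → Fin n → ℕ) :
    betaPWalk k a = stepSum (betaP k a) := rfl

lemma betaMWalk_eq_stepSum {n : ℕ} (k : ℕ) (a : Fin n → Fin n → ℕ) :
    betaMWalk k a = stepSum (betaM k a) := rfl

lemma dotProd_add (k : ℕ) (b₁ b₂ : ℕ → ℤ) (d : ℕ → ℝ) :
    dotProd k (b₁ + b₂) d = dotProd k b₁ d + dotProd k b₂ d := by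
  simp [dotProd, add_mul, Finset.sum_add_distrib]

lemma dotProd_neg (k : ℕ) (b : ℕ → ℤ) (d : ℕ → ℝ) :
    dotProd k (-b) d = -dotProd k b d := by
  simp [dotProd, Finset.sum_neg_distrib]

section Symmetric

variable {n k : ℕ} {a : Fin n → Fin n → ℕ} (hsym : ∀ u v, a u v = a v u)
include hsym

lemma betaM_swap (x y : Fin n) : betaM k a y x = -betaP k a x y := by
  rcases lt_trichotomy x y with h | rfl | h
  · simp only [betaP, betaM, if_neg (not_lt_of_gt h), if_pos h, hsym y x]
  · simp [betaP, betaM]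
  · simp only [betaP, betaM, if_neg (not_lt_of_gt h), if_pos h, hsym y x]
    split <;> simp

lemma betaMWalk_reverse (w : List (Fin n)) : betaMWalk k a w.reverse = -betaPWalk k a w := by
  simp only [betaMWalk_eq_stepSum, betaPWalk_eq_stepSum, stepSum_reverse, betaM_swap hsym,
    stepSum_neg]

lemma IsUBWalk.reverse {u v : Fin n} {w : List (Fin n)} (hw : IsUBWalk a u v w) :
    IsLBWalk a v u w.reverse := by
  obtain ⟨hhead, hlast, hchain⟩ := hw
  refine ⟨by rwa [List.head?_reverse], by rwa [List.getLast?_reverse], ?_⟩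
  exact List.isChain_reverse.mpr <| hchain.imp fun x y hxy => ⟨hxy.1.symm, hsym y x ▸ hxy.2⟩

lemma dotProd_betaPWalk_add_pos {d : ℕ → ℝ} (hpc : PathCondition n k a d) {p q : Fin n}
    (hpq : p ≠ q) {P Q : List (Fin n)} (hP : IsUBWalk a p q P) (hPn : P.Nodup)
    (hQ : IsUBWalk a q p Q) (hQn : Q.Nodup) :
    0 < dotProd k (betaPWalk k a P) d + dotProd k (betaPWalk k a Q) d := by
  wlog hlt : p < q generalizing p q P Q
  · rw [add_comm]
    exact this hpq.symm hQ hQn hP hPn (lt_of_le_of_ne (not_lt.mp hlt) hpq.symm)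
  have := hpc p q hlt P Q.reverse hP hPn (hQ.reverse hsym) (List.nodup_reverse.mpr hQn)
  rw [betaMWalk_reverse hsym, dotProd_neg] at this
  linarith

end Symmetric

theorem statement5_general (n k : ℕ) (a : Fin n → Fin n → ℕ)
    (hA : IsRobinson n k a) (d : ℕ → ℝ)
    (hpc : PathCondition n k a d) (C : List (Fin n)) (hC : IsUBCycle a C) :
    0 < dotProd k (betaPWalk k a C) d := by
  obtain ⟨u, ⟨hhead, hlast, hchain⟩, hlen, hnodup⟩ := hC
  set P := C.dropLast
  have hP : P ≠ [] := List.ne_nil_of_length_pos (by simp only [P, List.length_dropLast]; omega)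
  set x := P.getLast hP
  have hC_eq : C = P ++ [u] := (List.dropLast_append_getLast? u hlast).symm
  rw [hC_eq] at hchain
  obtain ⟨hPchain, -, hjoin⟩ := List.isChain_append.mp hchain
  have hxu := hjoin x (List.getLast?_eq_some_getLast hP) u rfl
  have hPwalk : IsUBWalk a u x P :=
    ⟨by rw [List.head?_dropLast, if_pos (by omega), hhead], List.getLast?_eq_some_getLast hP,
      hPchain⟩
  have hstep : IsUBWalk a x u [x, u] := ⟨rfl, rfl, List.isChain_pair.mpr hxu⟩
  have hsplit : betaPWalk k a C = betaPWalk k a P + betaPWalk k a [x, u] := by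
    simp [hC_eq, betaPWalk_eq_stepSum, stepSum_concat _ P hP, x]
  rw [hsplit, dotProd_add]
  exact dotProd_betaPWalk_add_pos hA.1 hpc hxu.1.symm hPwalk hnodup hstep (by simp [hxu.1])

/-- Lemma 2: if `d ∈ 𝔻ᵏ` satisfies the path condition for the Robinson
matrix `A`, then every upper-bound-cycle `C` satisfies `β⁺(C)ᵀ d > 0`. -/
theorem statement5 (n k : ℕ) (hn : 1 ≤ n) (hk : 1 ≤ k) (a : Fin n → Fin n → ℕ)
    (hA : IsRobinson n k a) (d : ℕ → ℝ) (hd : IsThreshold k d)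
    (hpc : PathCondition n k a d) (C : List (Fin n)) (hC : IsUBCycle a C) :
    0 < dotProd k (betaPWalk k a C) d :=
  statement5_general n k a hA d hpc C hC
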